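/- Let X ∈ ℝ^{n×d} have n = d+1 rows, i ∈ {1..n}, and suppose X_{−i} (X with row i removed) has rank d. Let y ∈ ℝ^n, w*(−i) be the unique solution of X_{−i} w = y_{−i}, and X̃ = (X, y) ∈ ℝ^{n×(d+1)} the matrix with y appended as a column. Then det(X̃^⊤ X̃) = det(X_{−i}^⊤ X_{−i}) · (x_i^⊤ w*(−i) − y_i)². -/

import Mathlib

/-! The augmented matrix `X̃` is square, so `det(X̃ᵀX̃) = det(X̃)²`. Subtracting `X w` from its last
column leaves `det X̃` unchanged and turns that column into the residual `y - X w`, which vanishes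
off row `i`; Laplace expansion along it gives `det X̃ = ±(y_i - x_iᵀw) det X_{-i}`, while
`det(X_{-i}ᵀX_{-i}) = det(X_{-i})²`. -/

open Matrix Finset

noncomputable section

/-- The submatrix of `X` consisting of the rows indexed by the subset `S`. -/
def rowSub {n d : ℕ} (X : Matrix (Fin n) (Fin d) ℝ) (S : Finset (Fin n)) :
    Matrix {i // i ∈ S} (Fin d) ℝ :=
  X.submatrix (fun i => (i : Fin n)) id

/-- `X_S^⊤ X_S`. -/
def gram {n d : ℕ} (X : Matrix (Fin n) (Fin d) ℝ) (S : Finset (Fin n)) :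
    Matrix (Fin d) (Fin d) ℝ :=
  (rowSub X S)ᵀ * rowSub X S

/-- The matrix `X̃ = (X, y)` with the response vector `y` appended as a last column. -/
def augment {n d : ℕ} (X : Matrix (Fin n) (Fin d) ℝ) (y : Fin n → ℝ) :
    Matrix (Fin n) (Fin (d + 1)) ℝ :=
  Matrix.of fun r c => Fin.lastCases (y r) (fun j => X r j) c

theorem gram_univ_erase {n d : ℕ} (X : Matrix (Fin (n + 1)) (Fin d) ℝ) (i : Fin (n + 1)) :
    gram X (univ.erase i) = (X.submatrix i.succAbove id)ᵀ * X.submatrix i.succAbove id := by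
  let e : Fin n ≃ {j // j ∈ univ.erase i} :=
    (finSuccAboveEquiv i).trans (Equiv.subtypeEquivRight (by simp))
  have hrow : rowSub X (univ.erase i) = (X.submatrix i.succAbove id).submatrix e.symm id := by
    ext j k
    obtain ⟨t, rfl⟩ := e.surjective j
    simp only [rowSub, submatrix_apply, Equiv.symm_apply_apply, id_eq]
    rfl
  rw [_root_.gram, hrow, transpose_submatrix, submatrix_mul_equiv, submatrix_id_id]

theorem updateCol_augment_last {n d : ℕ} (X : Matrix (Fin n) (Fin d) ℝ) (y z : Fin n → ℝ) :
    (augment X y).updateCol (Fin.last d) z = augment X z := by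
  ext r c
  refine Fin.lastCases ?_ (fun j => ?_) c
  · simp [augment]
  · simp [augment, (Fin.castSucc_lt_last j).ne]

theorem det_augment_sub_mulVec {d : ℕ} (X : Matrix (Fin (d + 1)) (Fin d) ℝ)
    (y : Fin (d + 1) → ℝ) (w : Fin d → ℝ) :
    (augment X (y - X *ᵥ w)).det = (augment X y).det := by
  have hcol : (fun r => ∑ c, (Fin.lastCases 1 (fun t => -w t) c : ℝ) • augment X y r c)
      = y - X *ᵥ w := by
    ext r
    simp [Fin.sum_univ_castSucc, augment, mulVec, dotProduct, sub_eq_neg_add, mul_comm]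
  rw [← hcol, ← updateCol_augment_last X y, det_updateCol_sum]
  simp

theorem det_augment_of_forall_ne_eq_zero {d : ℕ} (X : Matrix (Fin (d + 1)) (Fin d) ℝ)
    (z : Fin (d + 1) → ℝ) (i : Fin (d + 1)) (hz : ∀ j, j ≠ i → z j = 0) :
    (augment X z).det = (-1) ^ (i + d : ℕ) * z i * (X.submatrix i.succAbove id).det := by
  rw [det_succ_column _ (Fin.last d), sum_eq_single i (fun j _ hj => by simp [augment, hz j hj])
    (by simp)]
  congr 2
  · simp [augment]
  · ext r c
    simp [augment, Fin.succAbove_last]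

theorem augmented_det_leave_one_out_general {d : ℕ} (X : Matrix (Fin (d + 1)) (Fin d) ℝ)
    (y : Fin (d + 1) → ℝ) (i : Fin (d + 1))
    (w : Fin d → ℝ) (hw : ∀ j, j ≠ i → X.mulVec w j = y j) :
    ((augment X y)ᵀ * augment X y).det
      = (gram X (Finset.univ.erase i)).det * (X.mulVec w i - y i) ^ 2 := by
  have hres : ∀ j, j ≠ i → (y - X *ᵥ w) j = 0 := fun j hj => by simp [hw j hj]
  rw [det_mul, det_transpose, ← det_augment_sub_mulVec X y w,
    det_augment_of_forall_ne_eq_zero X _ i hres, gram_univ_erase, det_mul, det_transpose]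
  have hsign : ((-1 : ℝ) ^ (i + d : ℕ)) ^ 2 = 1 := by
    rw [← pow_mul, pow_mul', neg_one_sq, one_pow]
  simp only [Pi.sub_apply]
  linear_combination (X.submatrix i.succAbove id).det ^ 2 * (y i - (X *ᵥ w) i) ^ 2 * hsign

/-- For `n = d+1` rows with `X_{−i}` of rank `d` and `w*(−i)` the interpolating solution
on the remaining rows: `det(X̃^⊤X̃) = det(X_{−i}^⊤X_{−i}) (x_i^⊤w*(−i) − y_i)²`. -/
theorem augmented_det_leave_one_out {d : ℕ} (X : Matrix (Fin (d + 1)) (Fin d) ℝ)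
    (y : Fin (d + 1) → ℝ) (i : Fin (d + 1))
    (hr : (rowSub X (Finset.univ.erase i)).rank = d)
    (w : Fin d → ℝ) (hw : ∀ j, j ≠ i → X.mulVec w j = y j) :
    ((augment X y)ᵀ * augment X y).det
      = (gram X (Finset.univ.erase i)).det * (X.mulVec w i - y i) ^ 2 :=
  augmented_det_leave_one_out_general X y i w hw
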